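/- For every word X in {D,E,A}* and any factorization with an adjacent pair D·A, the weight generating function of multi-Catalan tableaux satisfies weight(X'·D·A·X'') = αβ·weight(X'·A·X''). -/

import Mathlib

inductive MSym : Type
  | a | b | x
deriving DecidableEq

inductive Letter : Type
  | D | E | A
deriving DecidableEq

/-- The content of the diagonal box of row `i` in a staircase filling of size `n`
(boxes `(i, j)` with `i + j < n`; the diagonal box of row `i` is `(i, n-1-i)`). -/
def diagRow (n : ℕ) (F : Fin n → Fin n → Option MSym) (i : Fin n) : Option MSym :=
  F i ⟨n - 1 - (i : ℕ), by have := i.isLt; omega⟩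

def diagCol (n : ℕ) (F : Fin n → Fin n → Option MSym) (j : Fin n) : Option MSym :=
  F ⟨n - 1 - (j : ℕ), by have := j.isLt; omega⟩ j

/-- A box is forced to be empty if there is a `β` to its right in its row or an `α`
below it in its column. -/
def ForcedEmpty (n : ℕ) (F : Fin n → Fin n → Option MSym) (i j : Fin n) : Prop :=
  (∃ j' : Fin n, j < j' ∧ F i j' = some MSym.b) ∨ (∃ i' : Fin n, i < i' ∧ F i' j = some MSym.a)

/-- A multi-Catalan tableau of size `n`: every box on the diagonal is filled (α, β or x);
a box left of a β in its row or above an α in its column is empty; a non-forced box in a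
D-row and E-column contains α or β; in a D-row and A-column contains β; in an A-row and
E-column contains α; every other box is empty. -/
def IsMCT (n : ℕ) (F : Fin n → Fin n → Option MSym) : Prop :=
  (∀ i j : Fin n, n ≤ (i : ℕ) + (j : ℕ) → F i j = none) ∧
  (∀ i : Fin n, diagRow n F i ≠ none) ∧
  (∀ i j : Fin n, (i : ℕ) + (j : ℕ) < n - 1 →
    (ForcedEmpty n F i j → F i j = none) ∧
    (¬ ForcedEmpty n F i j →
      match diagRow n F i, diagCol n F j with
      | some MSym.a, some MSym.b => F i j = some MSym.a ∨ F i j = some MSym.b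
      | some MSym.a, some MSym.x => F i j = some MSym.b
      | some MSym.x, some MSym.b => F i j = some MSym.a
      | _, _ => F i j = none))

def symToLetter : Option MSym → Letter
  | some MSym.a => Letter.D
  | some MSym.b => Letter.E
  | _ => Letter.A

/-- The type of a tableau: the word in {D, E, A} read off the diagonal from top to bottom. -/
def typeWord (n : ℕ) (F : Fin n → Fin n → Option MSym) : List Letter :=
  List.ofFn fun i : Fin n => symToLetter (diagRow n F i)

def countSym (n : ℕ) (F : Fin n → Fin n → Option MSym) (s : MSym) : ℕ :=
  (Finset.univ.filter fun p : Fin n × Fin n => F p.1 p.2 = some s).card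

/-- The weight of a tableau: the product of all its α's and β's. -/
noncomputable def wt (n : ℕ) (α β : ℝ) (F : Fin n → Fin n → Option MSym) : ℝ :=
  α ^ countSym n F MSym.a * β ^ countSym n F MSym.b

/-- The weight generating function of a word: the sum of the weights over all
multi-Catalan tableaux of that type. -/
noncomputable def wordWeight (α β : ℝ) (X : List Letter) : ℝ :=
  ∑ᶠ T : {F : Fin X.length → Fin X.length → Option MSym //
      IsMCT X.length F ∧ typeWord X.length F = X}, wt X.length α β T.1

/-!
In a tableau of type `X'·D·A·X''`, the `D` row has `α` on its diagonal, and the box just left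
of it lies above the diagonal `x` of the `A` row, so it must hold `β`. That `β` empties the rest
of the `D` row and the `α` empties the rest of its column. Deleting this row and column is
therefore a bijection onto the tableaux of type `X'·A·X''` that divides the weight by `αβ`.
Its inverse inserts them again: no surviving box gains or loses a reason to be empty, and its
filling rule is unchanged.
-/

open Function

section FinIndex

variable {n : ℕ}

theorem val_succAbove_eq_ite (p : Fin (n + 1)) (i : Fin n) :
    (p.succAbove i : ℕ) = if (i : ℕ) < p then (i : ℕ) else (i : ℕ) + 1 := by
  unfold Fin.succAbove
  split_ifs <;> simp_all [Fin.lt_def]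

/-- Deleting row `p` and column `p.rev` of a staircase keeps boxes on the same side of the
antidiagonal. -/
theorem succAbove_add_succAbove_rev_lt_iff (p : Fin (n + 1)) (i j : Fin n) :
    (p.succAbove i : ℕ) + p.rev.succAbove j < n ↔ (i : ℕ) + j + 1 < n := by
  rw [val_succAbove_eq_ite, val_succAbove_eq_ite, Fin.val_rev]
  split_ifs <;> omega

theorem le_succAbove_add_succAbove_rev_iff (p : Fin (n + 1)) (i j : Fin n) :
    n + 1 ≤ (p.succAbove i : ℕ) + p.rev.succAbove j ↔ n ≤ (i : ℕ) + j := by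
  rw [val_succAbove_eq_ite, val_succAbove_eq_ite, Fin.val_rev]
  split_ifs <;> omega

theorem exists_gt_succAbove_iff {p : Fin (n + 1)} {P : Fin (n + 1) → Prop} (hp : ¬ P p)
    (j : Fin n) : (∃ k, p.succAbove j < k ∧ P k) ↔ ∃ k, j < k ∧ P (p.succAbove k) := by
  constructor
  · rintro ⟨k, hjk, hk⟩
    obtain ⟨k, rfl⟩ := Fin.exists_succAbove_eq (show k ≠ p by rintro rfl; exact hp hk)
    exact ⟨k, Fin.succAbove_lt_succAbove_iff.1 hjk, hk⟩
  · rintro ⟨k, hjk, hk⟩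
    exact ⟨p.succAbove k, Fin.succAbove_lt_succAbove_iff.2 hjk, hk⟩

theorem List.ofFn_insertNth {α : Type*} (p : Fin (n + 1)) (x : α) (f : Fin n → α) :
    List.ofFn (Fin.insertNth p x f) = (List.ofFn f).insertIdx p x := by
  refine List.ext_getElem
    (by simp [List.length_insertIdx_of_le_length (show (p : ℕ) ≤ (List.ofFn f).length by
      simpa using p.is_le)])
    fun k hk _ => ?_
  rw [List.getElem_ofFn, List.getElem_insertIdx]
  obtain h | ⟨j, h⟩ := Fin.eq_self_or_eq_succAbove p ⟨k, by simpa using hk⟩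
  · have hk : k = p := congrArg Fin.val h
    simp [hk]
  · have hk : k = p.succAbove j := congrArg Fin.val h
    rw [h, Fin.insertNth_apply_succAbove]
    rw [val_succAbove_eq_ite] at hk
    split_ifs at hk ⊢ <;> first | omega | simp [hk]

end FinIndex

section Tableaux

variable {n : ℕ}

def cellRule (dr dc v : Option MSym) : Prop :=
  match dr, dc with
  | some MSym.a, some MSym.b => v = some MSym.a ∨ v = some MSym.b
  | some MSym.a, some MSym.x => v = some MSym.b
  | some MSym.x, some MSym.b => v = some MSym.a
  | _, _ => v = none

def IsLegalBox (n : ℕ) (F : Fin n → Fin n → Option MSym) (i j : Fin n) : Prop :=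
  (ForcedEmpty n F i j → F i j = none) ∧
    (¬ ForcedEmpty n F i j → cellRule (diagRow n F i) (diagCol n F j) (F i j))

theorem isMCT_iff (F : Fin n → Fin n → Option MSym) : IsMCT n F ↔
    (∀ i j : Fin n, n ≤ (i : ℕ) + j → F i j = none) ∧
    (∀ i : Fin n, diagRow n F i ≠ none) ∧
    (∀ i j : Fin n, (i : ℕ) + j < n - 1 → IsLegalBox n F i j) :=
  Iff.rfl

theorem diagRow_eq (F : Fin n → Fin n → Option MSym) (i : Fin n) :
    diagRow n F i = F i i.rev := by
  unfold diagRow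
  congr 1
  ext
  simp only [Fin.val_rev]
  omega

theorem diagCol_eq (F : Fin n → Fin n → Option MSym) (j : Fin n) :
    diagCol n F j = F j.rev j := by
  unfold diagCol
  congr 1
  ext
  simp only [Fin.val_rev]
  omega

theorem symToLetter_eq_D_iff {o : Option MSym} : symToLetter o = Letter.D ↔ o = some MSym.a := by
  rcases o with _ | _ | _ | _ <;> simp [symToLetter]

theorem symToLetter_eq_A_iff {o : Option MSym} (ho : o ≠ none) :
    symToLetter o = Letter.A ↔ o = some MSym.x := by
  rcases o with _ | _ | _ | _ <;> simp_all [symToLetter]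

theorem getElem?_typeWord (F : Fin n → Fin n → Option MSym) (i : Fin n) :
    (typeWord n F)[(i : ℕ)]? = some (symToLetter (diagRow n F i)) := by
  simp [typeWord]

/-- The row inserted above row `r`: the diagonal `α` of a `D` sits in the new column
`r.rev.succ`, and the `β` it forces sits above the diagonal `x` of row `r`. -/
def daRow (r : Fin n) : Fin (n + 1) → Option MSym :=
  Fin.insertNth r.rev.succ (some MSym.a) (update (fun _ => none) r.rev (some MSym.b))

def insertDA (r : Fin n) (F : Fin n → Fin n → Option MSym) :
    Fin (n + 1) → Fin (n + 1) → Option MSym :=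
  Fin.insertNth r.castSucc (daRow r) fun i => Fin.insertNth r.rev.succ none (F i)

def eraseDA (r : Fin n) (G : Fin (n + 1) → Fin (n + 1) → Option MSym) :
    Fin n → Fin n → Option MSym :=
  fun i j => G (r.castSucc.succAbove i) (r.rev.succ.succAbove j)

variable (r : Fin n) (F : Fin n → Fin n → Option MSym)

@[simp] theorem daRow_rev_succ : daRow r r.rev.succ = some MSym.a :=
  Fin.insertNth_apply_same _ _ _

@[simp] theorem daRow_succAbove (j : Fin n) :
    daRow r (r.rev.succ.succAbove j) = if j = r.rev then some MSym.b else none := by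
  simp [daRow, update_apply]

@[simp] theorem insertDA_castSucc : insertDA r F r.castSucc = daRow r :=
  Fin.insertNth_apply_same _ _ _

@[simp] theorem insertDA_succAbove_rev_succ (i : Fin n) :
    insertDA r F (r.castSucc.succAbove i) r.rev.succ = none := by
  simp [insertDA]

@[simp] theorem insertDA_succAbove_succAbove (i j : Fin n) :
    insertDA r F (r.castSucc.succAbove i) (r.rev.succ.succAbove j) = F i j := by
  simp [insertDA]

@[simp] theorem eraseDA_insertDA : eraseDA r (insertDA r F) = F := by
  funext i j
  exact insertDA_succAbove_succAbove r F i j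

@[simp] theorem diagRow_insertDA_castSucc :
    diagRow (n + 1) (insertDA r F) r.castSucc = some MSym.a := by
  rw [diagRow_eq, Fin.rev_castSucc, insertDA_castSucc, daRow_rev_succ]

@[simp] theorem diagRow_insertDA_succAbove (i : Fin n) :
    diagRow (n + 1) (insertDA r F) (r.castSucc.succAbove i) = diagRow n F i := by
  rw [diagRow_eq, diagRow_eq, Fin.rev_succAbove, Fin.rev_castSucc, insertDA_succAbove_succAbove]

@[simp] theorem diagCol_insertDA_succAbove (j : Fin n) :
    diagCol (n + 1) (insertDA r F) (r.rev.succ.succAbove j) = diagCol n F j := by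
  rw [diagCol_eq, diagCol_eq, Fin.rev_succAbove, Fin.rev_succ, Fin.rev_rev,
    insertDA_succAbove_succAbove]

theorem typeWord_insertDA :
    typeWord (n + 1) (insertDA r F) = (typeWord n F).insertIdx r Letter.D := by
  have hdiag : (fun I => symToLetter (diagRow (n + 1) (insertDA r F) I)) =
      Fin.insertNth r.castSucc Letter.D fun i => symToLetter (diagRow n F i) := by
    rw [Fin.eq_insertNth_iff]
    exact ⟨by rw [diagRow_insertDA_castSucc]; rfl,
      funext fun i => by rw [Fin.removeNth, diagRow_insertDA_succAbove]⟩
  rw [typeWord, hdiag, List.ofFn_insertNth, Fin.val_castSucc, typeWord]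

theorem forcedEmpty_insertDA_iff (i j : Fin n) :
    ForcedEmpty (n + 1) (insertDA r F) (r.castSucc.succAbove i) (r.rev.succ.succAbove j) ↔
      ForcedEmpty n F i j := by
  unfold ForcedEmpty
  rw [exists_gt_succAbove_iff (by simp), exists_gt_succAbove_iff (by simp)]
  simp only [insertDA_succAbove_succAbove]

theorem insertDA_eq_none_of_le (hout : ∀ i j : Fin n, n ≤ (i : ℕ) + j → F i j = none)
    (I J : Fin (n + 1)) (hIJ : n + 1 ≤ (I : ℕ) + J) : insertDA r F I J = none := by
  have hr := r.isLt
  obtain rfl | ⟨i, rfl⟩ := Fin.eq_self_or_eq_succAbove r.castSucc I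
  · obtain rfl | ⟨j, rfl⟩ := Fin.eq_self_or_eq_succAbove r.rev.succ J
    · simp only [Fin.val_castSucc, Fin.val_succ, Fin.val_rev] at hIJ
      omega
    · rw [insertDA_castSucc, daRow_succAbove, if_neg]
      rintro rfl
      simp only [Fin.succAbove_succ_self, Fin.val_castSucc, Fin.val_rev] at hIJ
      omega
  · obtain rfl | ⟨j, rfl⟩ := Fin.eq_self_or_eq_succAbove r.rev.succ J
    · exact insertDA_succAbove_rev_succ r F i
    · rw [insertDA_succAbove_succAbove]
      have hiff := le_succAbove_add_succAbove_rev_iff r.castSucc i j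
      rw [Fin.rev_castSucc] at hiff
      exact hout i j (hiff.1 hIJ)

/-- Only the diagonal `α` of the `D` row and the `x` below this box could force it empty. -/
theorem not_forcedEmpty_castSucc_rev_castSucc {G : Fin (n + 1) → Fin (n + 1) → Option MSym}
    (hout : ∀ I J : Fin (n + 1), n + 1 ≤ (I : ℕ) + J → G I J = none)
    (hD : diagRow (n + 1) G r.castSucc = some MSym.a)
    (hA : diagRow (n + 1) G r.succ = some MSym.x) :
    ¬ ForcedEmpty (n + 1) G r.castSucc r.rev.castSucc := by
  rw [diagRow_eq, Fin.rev_castSucc] at hD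
  rw [diagRow_eq, Fin.rev_succ] at hA
  rintro (⟨J, hJ, hb⟩ | ⟨I, hI, ha⟩)
  · obtain rfl | hJ' := eq_or_ne J r.rev.succ
    · simp [hD] at hb
    · rw [hout _ _ ?_] at hb
      · simp at hb
      rw [Ne, Fin.ext_iff] at hJ'
      simp only [Fin.lt_def, Fin.val_castSucc, Fin.val_succ, Fin.val_rev] at hJ hJ' ⊢
      omega
  · obtain rfl | hI' := eq_or_ne I r.succ
    · simp [hA] at ha
    · rw [hout _ _ ?_] at ha
      · simp at ha
      rw [Ne, Fin.ext_iff] at hI'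
      simp only [Fin.lt_def, Fin.val_castSucc, Fin.val_succ, Fin.val_rev] at hI hI' ⊢
      omega

theorem isLegalBox_insertDA_succAbove_iff (i j : Fin n) :
    IsLegalBox (n + 1) (insertDA r F) (r.castSucc.succAbove i) (r.rev.succ.succAbove j) ↔
      IsLegalBox n F i j := by
  simp only [IsLegalBox, forcedEmpty_insertDA_iff, diagRow_insertDA_succAbove,
    diagCol_insertDA_succAbove, insertDA_succAbove_succAbove]

theorem isMCT_of_isMCT_insertDA (h : IsMCT (n + 1) (insertDA r F)) : IsMCT n F := by
  rw [isMCT_iff] at h ⊢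
  obtain ⟨hout, hdiag, hlegal⟩ := h
  refine ⟨fun i j hij => ?_, fun i => ?_, fun i j hij => ?_⟩
  · have hiff := le_succAbove_add_succAbove_rev_iff r.castSucc i j
    rw [Fin.rev_castSucc] at hiff
    simpa using hout _ _ (hiff.2 hij)
  · simpa using hdiag (r.castSucc.succAbove i)
  · have hiff := succAbove_add_succAbove_rev_lt_iff r.castSucc i j
    rw [Fin.rev_castSucc] at hiff
    exact (isLegalBox_insertDA_succAbove_iff r F i j).1
      (hlegal _ _ (by have := hiff.2 (by omega); omega))

theorem isLegalBox_insertDA_castSucc (hout : ∀ i j : Fin n, n ≤ (i : ℕ) + j → F i j = none)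
    (hx : diagRow n F r = some MSym.x) (J : Fin (n + 1)) (hJ : (r : ℕ) + J < n) :
    IsLegalBox (n + 1) (insertDA r F) r.castSucc J := by
  obtain rfl | ⟨j, rfl⟩ := Fin.eq_self_or_eq_succAbove r.rev.succ J
  · simp only [Fin.val_succ, Fin.val_rev] at hJ
    omega
  obtain hj | rfl | hj := lt_trichotomy j r.rev
  · have hnone : insertDA r F r.castSucc (r.rev.succ.succAbove j) = none := by
      simp [hj.ne]
    refine ⟨fun _ => hnone, fun hfree => absurd (Or.inl ⟨r.rev.castSucc, ?_, ?_⟩) hfree⟩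
    · rw [Fin.lt_def, val_succAbove_eq_ite]
      simp only [Fin.lt_def, Fin.val_castSucc, Fin.val_succ] at hj ⊢
      split_ifs <;> omega
    · simpa using daRow_succAbove r r.rev
  · have hA : diagRow (n + 1) (insertDA r F) r.succ = some MSym.x := by
      rw [← Fin.succAbove_castSucc_self, diagRow_insertDA_succAbove, hx]
    refine ⟨fun hforced => absurd hforced ?_, fun _ => ?_⟩
    · rw [Fin.succAbove_succ_self]
      exact not_forcedEmpty_castSucc_rev_castSucc r
        (insertDA_eq_none_of_le r F hout) (by simp) hA
    · rw [diagCol_insertDA_succAbove, diagCol_eq, Fin.rev_rev, ← diagRow_eq F r, hx,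
        diagRow_insertDA_castSucc, insertDA_castSucc, daRow_succAbove, if_pos rfl]
      rfl
  · rw [val_succAbove_eq_ite, if_neg (by simp [Fin.lt_def] at hj ⊢; omega)] at hJ
    simp only [Fin.lt_def, Fin.val_rev] at hJ hj
    omega

theorem isMCT_insertDA (hF : IsMCT n F) (hx : diagRow n F r = some MSym.x) :
    IsMCT (n + 1) (insertDA r F) := by
  rw [isMCT_iff] at hF ⊢
  obtain ⟨hout, hdiag, hlegal⟩ := hF
  refine ⟨insertDA_eq_none_of_le r F hout, fun I => ?_, fun I J hIJ => ?_⟩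
  · obtain rfl | ⟨i, rfl⟩ := Fin.eq_self_or_eq_succAbove r.castSucc I
    · rw [diagRow_insertDA_castSucc]
      exact Option.some_ne_none _
    · rw [diagRow_insertDA_succAbove]
      exact hdiag i
  obtain rfl | ⟨i, rfl⟩ := Fin.eq_self_or_eq_succAbove r.castSucc I
  · exact isLegalBox_insertDA_castSucc r F hout hx J (by simpa using hIJ)
  obtain rfl | ⟨j, rfl⟩ := Fin.eq_self_or_eq_succAbove r.rev.succ J
  · have hi : r.castSucc.succAbove i < r.castSucc := by
      simp only [Fin.lt_def, Fin.val_castSucc, Fin.val_succ, Fin.val_rev] at hIJ ⊢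
      omega
    exact ⟨fun _ => by simp, fun hfree => absurd (Or.inr ⟨r.castSucc, hi, by simp⟩) hfree⟩
  · have hiff := succAbove_add_succAbove_rev_lt_iff r.castSucc i j
    rw [Fin.rev_castSucc] at hiff
    exact (isLegalBox_insertDA_succAbove_iff r F i j).2
      (hlegal i j (by have := hiff.1 (by omega); omega))

section StructureOfDA

variable {G : Fin (n + 1) → Fin (n + 1) → Option MSym}

theorem apply_castSucc_eq_daRow (hG : IsMCT (n + 1) G)
    (hD : diagRow (n + 1) G r.castSucc = some MSym.a)
    (hA : diagRow (n + 1) G r.succ = some MSym.x) :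
    G r.castSucc = daRow r := by
  rw [isMCT_iff] at hG
  obtain ⟨hout, -, hlegal⟩ := hG
  have hr := r.isLt
  have hβ : G r.castSucc r.rev.castSucc = some MSym.b := by
    have hcol : diagCol (n + 1) G r.rev.castSucc = some MSym.x := by
      rw [diagCol_eq, Fin.rev_castSucc, Fin.rev_rev, ← hA, diagRow_eq, Fin.rev_succ]
    have hrule := (hlegal r.castSucc r.rev.castSucc (by simp; omega)).2
      (not_forcedEmpty_castSucc_rev_castSucc r hout hD hA)
    rw [hD, hcol] at hrule
    exact hrule
  funext J
  obtain rfl | ⟨j, rfl⟩ := Fin.eq_self_or_eq_succAbove r.rev.succ J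
  · rw [daRow_rev_succ, ← hD, diagRow_eq, Fin.rev_castSucc]
  rw [daRow_succAbove]
  obtain hj | rfl | hj := lt_trichotomy j r.rev
  · rw [if_neg hj.ne]
    refine (hlegal _ _ ?_).1 (Or.inl ⟨r.rev.castSucc, ?_, hβ⟩) <;>
      simp only [Fin.lt_def, val_succAbove_eq_ite, Fin.val_castSucc, Fin.val_succ,
        Fin.val_rev] at hj ⊢ <;> split_ifs <;> omega
  · rw [if_pos rfl, Fin.succAbove_succ_self, hβ]
  · rw [if_neg hj.ne', hout]
    simp only [Fin.lt_def, val_succAbove_eq_ite, Fin.val_castSucc, Fin.val_succ,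
      Fin.val_rev] at hj ⊢
    split_ifs <;> omega

theorem apply_succAbove_rev_succ_eq_none (hG : IsMCT (n + 1) G)
    (hD : diagRow (n + 1) G r.castSucc = some MSym.a) (i : Fin n) :
    G (r.castSucc.succAbove i) r.rev.succ = none := by
  rw [isMCT_iff] at hG
  obtain ⟨hout, -, hlegal⟩ := hG
  have hα : G r.castSucc r.rev.succ = some MSym.a := by rwa [diagRow_eq, Fin.rev_castSucc] at hD
  obtain hi | hi := lt_or_ge i r
  · refine (hlegal _ _ ?_).1 (Or.inr ⟨r.castSucc, ?_, hα⟩) <;>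
      simp only [Fin.lt_def, val_succAbove_eq_ite, Fin.val_castSucc, Fin.val_succ,
        Fin.val_rev] at hi ⊢ <;> split_ifs <;> omega
  · apply hout
    simp only [Fin.le_def, val_succAbove_eq_ite, Fin.val_castSucc, Fin.val_succ,
      Fin.val_rev] at hi ⊢
    split_ifs <;> omega

theorem insertDA_eraseDA (hG : IsMCT (n + 1) G)
    (hD : diagRow (n + 1) G r.castSucc = some MSym.a)
    (hA : diagRow (n + 1) G r.succ = some MSym.x) :
    insertDA r (eraseDA r G) = G := by
  rw [insertDA, Fin.insertNth_eq_iff]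
  refine ⟨(apply_castSucc_eq_daRow r hG hD hA).symm, funext fun i => ?_⟩
  rw [Fin.removeNth, Fin.insertNth_eq_iff]
  exact ⟨(apply_succAbove_rev_succ_eq_none r hG hD i).symm, rfl⟩

end StructureOfDA

def boxWeight (α β : ℝ) : Option MSym → ℝ
  | some MSym.a => α
  | some MSym.b => β
  | _ => 1

theorem wt_eq_prod (α β : ℝ) : wt n α β F = ∏ i, ∏ j, boxWeight α β (F i j) := by
  have hbox : ∀ v, boxWeight α β v =
      (if v = some MSym.a then α else 1) * (if v = some MSym.b then β else 1) := by
    rintro (_ | _ | _ | _) <;> simp [boxWeight]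
  rw [← Fintype.prod_prod_type']
  simp only [hbox, Finset.prod_mul_distrib, Finset.prod_ite,
    Finset.prod_const_one, mul_one, Finset.prod_const, wt, countSym]

theorem prod_boxWeight_daRow (α β : ℝ) : ∏ J, boxWeight α β (daRow r J) = α * β := by
  rw [Fin.prod_univ_succAbove _ r.rev.succ, daRow_rev_succ,
    Fintype.prod_eq_single r.rev fun j hj => by simp [hj, boxWeight], daRow_succAbove, if_pos rfl]
  rfl

theorem wt_insertDA (α β : ℝ) : wt (n + 1) α β (insertDA r F) = α * β * wt n α β F := by
  rw [wt_eq_prod, wt_eq_prod, Fin.prod_univ_succAbove _ r.castSucc, insertDA_castSucc,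
    prod_boxWeight_daRow]
  congr 1
  refine Finset.prod_congr rfl fun i _ => ?_
  rw [Fin.prod_univ_succAbove _ r.rev.succ]
  simp [boxWeight]

abbrev MCTableau (n : ℕ) (X : List Letter) :=
  {F : Fin n → Fin n → Option MSym // IsMCT n F ∧ typeWord n F = X}

theorem wordWeight_eq_finsum (α β : ℝ) {X : List Letter} (h : X.length = n) :
    wordWeight α β X = ∑ᶠ T : MCTableau n X, wt n α β T.1 := by
  subst h
  rfl

theorem diagRow_eq_a_of_getElem? {F : Fin n → Fin n → Option MSym} {i : Fin n}
    (h : (typeWord n F)[(i : ℕ)]? = some Letter.D) : diagRow n F i = some MSym.a := by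
  rw [getElem?_typeWord] at h
  exact symToLetter_eq_D_iff.1 (Option.some.inj h)

theorem diagRow_eq_x_of_getElem? {F : Fin n → Fin n → Option MSym} (hF : IsMCT n F) {i : Fin n}
    (h : (typeWord n F)[(i : ℕ)]? = some Letter.A) : diagRow n F i = some MSym.x := by
  rw [getElem?_typeWord] at h
  exact (symToLetter_eq_A_iff (((isMCT_iff F).1 hF).2.1 i)).1 (Option.some.inj h)

theorem insertDA_eraseDA_of_typeWord {X : List Letter} (hA : X[(r : ℕ)]? = some Letter.A)
    {G : Fin (n + 1) → Fin (n + 1) → Option MSym}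
    (hG : IsMCT (n + 1) G ∧ typeWord (n + 1) G = X.insertIdx r Letter.D) :
    insertDA r (eraseDA r G) = G := by
  obtain ⟨hr, -⟩ := List.getElem?_eq_some_iff.1 hA
  refine insertDA_eraseDA r hG.1 (diagRow_eq_a_of_getElem? ?_) (diagRow_eq_x_of_getElem? hG.1 ?_)
  · rw [hG.2, Fin.val_castSucc, List.getElem?_insertIdx_self, if_pos hr.le]
  · rw [hG.2, Fin.val_succ, List.getElem?_insertIdx_of_gt (by omega), Nat.add_sub_cancel, hA]

def insertDAEquiv {X : List Letter} (hA : X[(r : ℕ)]? = some Letter.A) :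
    MCTableau n X ≃ MCTableau (n + 1) (X.insertIdx r Letter.D) where
  toFun T := ⟨insertDA r T.1, isMCT_insertDA r T.1 T.2.1
      (diagRow_eq_x_of_getElem? T.2.1 (by rw [T.2.2, hA])), by rw [typeWord_insertDA, T.2.2]⟩
  invFun T := ⟨eraseDA r T.1,
    isMCT_of_isMCT_insertDA r _ (by rw [insertDA_eraseDA_of_typeWord r hA T.2]; exact T.2.1), by
      rw [← List.eraseIdx_insertIdx_self (l := typeWord n (eraseDA r T.1)) (i := r) Letter.D,
        ← typeWord_insertDA, insertDA_eraseDA_of_typeWord r hA T.2, T.2.2,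
        List.eraseIdx_insertIdx_self]⟩
  left_inv T := Subtype.ext (eraseDA_insertDA r T.1)
  right_inv T := Subtype.ext (insertDA_eraseDA_of_typeWord r hA T.2)

end Tableaux

theorem wordWeight_insertIdx_D (α β : ℝ) {X : List Letter} {r : ℕ}
    (hA : X[r]? = some Letter.A) :
    wordWeight α β (X.insertIdx r Letter.D) = α * β * wordWeight α β X := by
  obtain ⟨hr, -⟩ := List.getElem?_eq_some_iff.1 hA
  rw [wordWeight_eq_finsum α β (List.length_insertIdx_of_le_length hr.le _),
    wordWeight_eq_finsum α β rfl, mul_finsum,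
    ← finsum_comp_equiv (insertDAEquiv (⟨r, hr⟩ : Fin X.length) hA)]
  exact finsum_congr fun T => wt_insertDA _ T.1 α β

/-- weight(X'·D·A·X'') = αβ·weight(X'·A·X''). -/
theorem wordWeight_DA (α β : ℝ) (X' X'' : List Letter) :
    wordWeight α β (X' ++ [Letter.D, Letter.A] ++ X'') =
      α * β * wordWeight α β (X' ++ [Letter.A] ++ X'') := by
  have hA : (X' ++ [Letter.A] ++ X'')[X'.length]? = some Letter.A := by simp
  have hX : X' ++ [Letter.D, Letter.A] ++ X'' =
      (X' ++ [Letter.A] ++ X'').insertIdx X'.length Letter.D := by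
    induction X' <;> simp_all
  rw [hX, wordWeight_insertIdx_D α β hA]
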